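/- arXiv:2109.05728 — 5 statements merged into one kernel-verified Lean document; each statement's English description precedes it below -/
import Mathlib

section
/- Let (M,d) be an ultrametric space and let A be a nonempty spherically complete subspace of M. Then A is proximinal in M; that is, for every x ∈ M there exists a₀ ∈ A with d(x,a₀) = dist(x,A). -/
open Metric

variable {M : Type*} [MetricSpace M]

/-- A subset `A` of a metric space is *spherically complete* (as a subspace) if every nested
decreasing sequence of closed balls of the subspace `A` has nonempty intersection. -/
def SphericallyCompleteSet (A : Set M) : Prop :=
  ∀ (c : ℕ → M) (r : ℕ → ℝ), (∀ n, c n ∈ A) → (∀ n, 0 ≤ r n) →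
    (∀ n, A ∩ closedBall (c (n + 1)) (r (n + 1)) ⊆ A ∩ closedBall (c n) (r n)) →
    (A ∩ ⋂ n, closedBall (c n) (r n)).Nonempty

/-- A metric space is *spherically complete* if every nested decreasing sequence of closed
balls has nonempty intersection. -/
def SphericallyCompleteSpace (M : Type*) [MetricSpace M] : Prop :=
  ∀ (c : ℕ → M) (r : ℕ → ℝ), (∀ n, 0 ≤ r n) →
    (∀ n, closedBall (c (n + 1)) (r (n + 1)) ⊆ closedBall (c n) (r n)) →
    (⋂ n, closedBall (c n) (r n)).Nonempty

/-- `dist(A, B) = inf {d(a,b) : a ∈ A, b ∈ B}`. -/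
noncomputable def setDist (A B : Set M) : ℝ :=
  sInf {t : ℝ | ∃ a ∈ A, ∃ b ∈ B, dist a b = t}

/-- A subset `A` is *proximinal* if every point of `M` has a best approximation in `A`. -/
def IsProximinal (A : Set M) : Prop :=
  ∀ x : M, ∃ a ∈ A, dist x a = infDist x A

/-- `A₀ = {x ∈ A : d(x,y) = dist(A,B) for some y ∈ B}`. -/
noncomputable def proxA (A B : Set M) : Set M :=
  {x ∈ A | ∃ y ∈ B, dist x y = setDist A B}

/-- `B₀ = {y ∈ B : d(x,y) = dist(A,B) for some x ∈ A}`. -/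
noncomputable def proxB (A B : Set M) : Set M :=
  {y ∈ B | ∃ x ∈ A, dist x y = setDist A B}

/-- The closed ball `B(c,r)`, `r > 0`, is a *minimal `F`-invariant ball* if `F(B) ⊆ B`
and `d(y, F(y)) = r` for each `y ∈ B`. -/
def IsMinimalInvariantBall (F : M → M) (c : M) (r : ℝ) : Prop :=
  0 < r ∧ Set.MapsTo F (closedBall c r) (closedBall c r) ∧
    ∀ y ∈ closedBall c r, dist y (F y) = r

/-! In an ultrametric space every point of a closed ball is a centre of it. Hence if `aₙ ∈ A` and
`d(x, aₙ) ≤ rₙ := dist(x, A) + 1/(n+1)`, the balls `B(aₙ, rₙ)` are the balls `B(x, rₙ)`, which are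
nested; a point `b ∈ A` of their intersection satisfies `d(x, b) ≤ dist(x, A)`. -/

lemma SphericallyCompleteSet.inter_iInter_closedBall_nonempty [IsUltrametricDist M]
    {A : Set M} (hsc : SphericallyCompleteSet A) (x : M) {r : ℕ → ℝ} (hr : Antitone r)
    (hmeet : ∀ n, (A ∩ closedBall x (r n)).Nonempty) :
    (A ∩ ⋂ n, closedBall x (r n)).Nonempty := by
  choose c hcA hcx using hmeet
  have hcentre : ∀ n, closedBall (c n) (r n) = closedBall x (r n) := fun n =>
    (IsUltrametricDist.closedBall_eq_of_mem (hcx n)).symm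
  have hr0 : ∀ n, 0 ≤ r n := fun n => nonempty_closedBall.mp ⟨c n, hcx n⟩
  have hnested : ∀ n, A ∩ closedBall (c (n + 1)) (r (n + 1)) ⊆ A ∩ closedBall (c n) (r n) :=
    fun n => by
      rw [hcentre, hcentre]
      exact Set.inter_subset_inter_right A (closedBall_subset_closedBall (hr n.le_succ))
  simpa only [hcentre] using hsc c r hcA hr0 hnested

/-- **Theorem (Kirk–Shahzad).** A nonempty spherically complete subspace `A` of an
ultrametric space `M` is proximinal in `M`. -/
theorem proximinal_of_sphericallyComplete {M : Type*} [MetricSpace M] [IsUltrametricDist M]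
    (A : Set M) (hA : A.Nonempty) (hsc : SphericallyCompleteSet A) :
    IsProximinal A := by
  intro x
  set d := infDist x A
  have hmeet : ∀ n : ℕ, (A ∩ closedBall x (d + 1 / (n + 1))).Nonempty := fun n => by
    obtain ⟨a, haA, hxa⟩ := (infDist_lt_iff hA).mp (lt_add_of_pos_right d Nat.one_div_pos_of_nat)
    exact ⟨a, haA, mem_closedBall'.mpr hxa.le⟩
  have hanti : Antitone fun n : ℕ => d + 1 / ((n : ℝ) + 1) := fun _ _ _ => by dsimp only; gcongr
  obtain ⟨b, hbA, hb⟩ := hsc.inter_iInter_closedBall_nonempty x hanti hmeet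
  have hxb : ∀ n : ℕ, dist x b ≤ d + 1 / (n + 1) := fun n =>
    mem_closedBall'.mp (Set.mem_iInter.mp hb n)
  refine ⟨b, hbA, le_antisymm ?_ (infDist_le_dist_of_mem hbA)⟩
  refine le_of_forall_pos_le_add fun ε hε => ?_
  obtain ⟨n, hn⟩ := exists_nat_one_div_lt hε
  linarith [hxb n]
end

section
/- Let (M,d) be a spherically complete ultrametric space and let F : M → M be a nonexpansive map. Then for every x ∈ M, the closed ball B(x, d(x,F(x))) = {y ∈ M : d(x,y) ≤ d(x,F(x))} contains either a fixed point of F or a minimal F-invariant ball. -/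
open Metric

variable {M : Type*} [MetricSpace M]

/-! The displacement `y ↦ d(y, F y)` does not increase on the ball `B(y, d(y, F y))`, so these
balls shrink when the centre moves inside them. Spherical completeness, applied to a sequence of
such balls along which the displacement approaches its infimum, gives a centre `c` whose
displacement is minimal on its own ball: either it is `0`, or that ball is minimal invariant. -/

section Ultrametric

variable [IsUltrametricDist M] {F : M → M}

theorem dist_apply_le_of_mem_closedBall (hF : ∀ x y : M, dist (F x) (F y) ≤ dist x y)
    {y z : M} (hz : z ∈ closedBall y (dist y (F y))) : dist z (F z) ≤ dist y (F y) := by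
  rw [mem_closedBall] at hz
  calc dist z (F z) ≤ max (dist z (F y)) (dist (F y) (F z)) :=
        IsUltrametricDist.dist_triangle_max _ _ _
    _ ≤ dist y (F y) :=
        max_le ((IsUltrametricDist.dist_triangle_max z y (F y)).trans (max_le hz le_rfl))
          ((hF y z).trans (dist_comm y z ▸ hz))

theorem closedBall_dist_apply_subset (hF : ∀ x y : M, dist (F x) (F y) ≤ dist x y)
    {y z : M} (hz : z ∈ closedBall y (dist y (F y))) :
    closedBall z (dist z (F z)) ⊆ closedBall y (dist y (F y)) :=
  (closedBall_subset_closedBall (dist_apply_le_of_mem_closedBall hF hz)).trans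
    (IsUltrametricDist.closedBall_eq_of_mem hz).symm.subset

theorem mapsTo_closedBall_dist_apply (hF : ∀ x y : M, dist (F x) (F y) ≤ dist x y) (c : M) :
    Set.MapsTo F (closedBall c (dist c (F c))) (closedBall c (dist c (F c))) := by
  intro y hy
  rw [mem_closedBall] at hy ⊢
  calc dist (F y) c ≤ max (dist (F y) y) (dist y c) := IsUltrametricDist.dist_triangle_max _ _ _
    _ ≤ dist c (F c) := max_le
        (dist_comm y (F y) ▸ dist_apply_le_of_mem_closedBall hF (mem_closedBall.2 hy)) hy

theorem isMinimalInvariantBall_of_forall_le (hF : ∀ x y : M, dist (F x) (F y) ≤ dist x y)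
    {c : M} (hc : 0 < dist c (F c))
    (hmin : ∀ y ∈ closedBall c (dist c (F c)), dist c (F c) ≤ dist y (F y)) :
    IsMinimalInvariantBall F c (dist c (F c)) :=
  ⟨hc, mapsTo_closedBall_dist_apply hF c, fun y hy =>
    (dist_apply_le_of_mem_closedBall hF hy).antisymm (hmin y hy)⟩

end Ultrametric

theorem exists_mem_forall_lt_add {α : Type*} {f : α → ℝ} {s : Set α} (hs : s.Nonempty)
    (hf : BddBelow (f '' s)) {ε : ℝ} (hε : 0 < ε) : ∃ z ∈ s, ∀ w ∈ s, f z < f w + ε := by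
  obtain ⟨_, ⟨z, hz, rfl⟩, hlt⟩ := Real.lt_sInf_add_pos (hs.image f) hε
  exact ⟨z, hz, fun w hw => hlt.trans_le (by gcongr; exact csInf_le hf ⟨w, hw, rfl⟩)⟩

theorem exists_mem_closedBall_forall_dist_apply_le [IsUltrametricDist M]
    (hM : SphericallyCompleteSpace M) {F : M → M}
    (hF : ∀ x y : M, dist (F x) (F y) ≤ dist x y) (x : M) :
    ∃ c ∈ closedBall x (dist x (F x)),
      ∀ y ∈ closedBall c (dist c (F c)), dist c (F c) ≤ dist y (F y) := by
  have hstep (y : M) (n : ℕ) : ∃ z ∈ closedBall y (dist y (F y)),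
      ∀ w ∈ closedBall y (dist y (F y)), dist z (F z) < dist w (F w) + 1 / (n + 1) :=
    exists_mem_forall_lt_add ⟨y, mem_closedBall_self dist_nonneg⟩
      ⟨0, by rintro _ ⟨w, -, rfl⟩; exact dist_nonneg⟩ Nat.one_div_pos_of_nat
  choose next hnext_mem hnext_lt using hstep
  let s : ℕ → M := fun n => Nat.rec (motive := fun _ => M) x (fun n y => next y n) n
  obtain ⟨c, hc⟩ := hM s (fun n => dist (s n) (F (s n))) (fun _ => dist_nonneg)
    (fun n => closedBall_dist_apply_subset hF (hnext_mem (s n) n))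
  have hcs : ∀ n, c ∈ closedBall (s n) (dist (s n) (F (s n))) := Set.mem_iInter.1 hc
  refine ⟨c, hcs 0, fun y hy => le_of_forall_pos_lt_add fun ε hε => ?_⟩
  obtain ⟨n, hn⟩ := exists_nat_one_div_lt hε
  calc dist c (F c) ≤ dist (s (n + 1)) (F (s (n + 1))) :=
        dist_apply_le_of_mem_closedBall hF (hcs (n + 1))
    _ < dist y (F y) + 1 / (n + 1) :=
        hnext_lt (s n) n y (closedBall_dist_apply_subset hF (hcs n) hy)
    _ < dist y (F y) + ε := by gcongr

/-- **Theorem (Kirk–Shahzad).** In a spherically complete ultrametric space, for a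
nonexpansive `F : M → M`, every closed ball `B(x, d(x, F x))` contains either a fixed
point of `F` or a minimal `F`-invariant ball. -/
theorem fixedPoint_or_minimalInvariantBall {M : Type*} [MetricSpace M] [IsUltrametricDist M]
    (hM : SphericallyCompleteSpace M) (F : M → M)
    (hF : ∀ x y : M, dist (F x) (F y) ≤ dist x y) (x : M) :
    (∃ p ∈ closedBall x (dist x (F x)), F p = p) ∨
      (∃ c : M, ∃ r : ℝ, IsMinimalInvariantBall F c r ∧
        closedBall c r ⊆ closedBall x (dist x (F x))) := by
  obtain ⟨c, hcx, hmin⟩ := exists_mem_closedBall_forall_dist_apply_le hM hF x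
  rcases (dist_nonneg (x := c) (y := F c)).eq_or_lt with hfix | hpos
  · exact Or.inl ⟨c, hcx, (dist_eq_zero.1 hfix.symm).symm⟩
  · exact Or.inr ⟨c, _, isMinimalInvariantBall_of_forall_le hF hpos hmin,
      closedBall_dist_apply_subset hF hcx⟩
end

section
/- Let (M,d) be a nonempty ultrametric space and let (A,B) be a proximinal pair of nonempty subsets of M such that δ(B) ≤ dist(A,B). Then the set A₀ is nonempty and the equality B₀ = B holds. -/
open Metric

variable {M : Type*} [MetricSpace M]

/-! For `b ∈ B`, a best approximation `a ∈ A` of `b` already realises `dist(A,B)`: for any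
`a' ∈ A`, `b' ∈ B` the strong triangle inequality gives
`d(a,b) ≤ d(b,a') ≤ max (d(b,b')) (d(b',a')) = d(a',b')`, because
`d(b,b') ≤ δ(B) ≤ dist(A,B) ≤ d(a',b')`. -/

section SetDist

variable {A B : Set M} {a b : M}

theorem setDist_le_dist (ha : a ∈ A) (hb : b ∈ B) : setDist A B ≤ dist a b :=
  csInf_le ⟨0, by rintro t ⟨a, -, b, -, rfl⟩; exact dist_nonneg⟩ ⟨a, ha, b, hb, rfl⟩

theorem dist_eq_setDist_of_forall_le (ha : a ∈ A) (hb : b ∈ B)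
    (hmin : ∀ a' ∈ A, ∀ b' ∈ B, dist a b ≤ dist a' b') : dist a b = setDist A B :=
  le_antisymm
    (le_csInf ⟨dist a b, a, ha, b, hb, rfl⟩ fun _ ⟨a', ha', b', hb', h⟩ ↦ h ▸ hmin a' ha' b' hb')
    (setDist_le_dist ha hb)

end SetDist

theorem IsUltrametricDist.dist_le_of_dist_le [IsUltrametricDist M] {x y z : M}
    (h : dist x y ≤ dist y z) : dist x z ≤ dist y z :=
  (IsUltrametricDist.dist_triangle_max x y z).trans (max_le h le_rfl)

theorem IsProximinal.exists_dist_eq_setDist [IsUltrametricDist M] {A B : Set M}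
    (hA : IsProximinal A) (hδ : ∀ x ∈ B, ∀ y ∈ B, dist x y ≤ setDist A B) {b : M}
    (hb : b ∈ B) : ∃ a ∈ A, dist a b = setDist A B := by
  obtain ⟨a, ha, hab⟩ := hA b
  refine ⟨a, ha, dist_eq_setDist_of_forall_le ha hb fun a' ha' b' hb' ↦ ?_⟩
  have hbb' : dist b b' ≤ dist b' a' := by
    rw [dist_comm b' a']
    exact (hδ b hb b' hb').trans (setDist_le_dist ha' hb')
  calc dist a b = infDist b A := by rw [dist_comm, hab]
    _ ≤ dist b a' := infDist_le_dist_of_mem ha'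
    _ ≤ dist b' a' := IsUltrametricDist.dist_le_of_dist_le hbb'
    _ = dist a' b' := dist_comm b' a'

theorem proxA_nonempty_and_proxB_eq_general {M : Type*} [MetricSpace M] [IsUltrametricDist M]
    (A B : Set M) (hB : B.Nonempty)
    (hAprox : IsProximinal A)
    (hδ : ∀ x ∈ B, ∀ y ∈ B, dist x y ≤ setDist A B) :
    (proxA A B).Nonempty ∧ proxB A B = B := by
  have hprox {b : M} (hb : b ∈ B) : b ∈ proxB A B := ⟨hb, hAprox.exists_dist_eq_setDist hδ hb⟩
  refine ⟨?_, Set.Subset.antisymm (fun _ hb ↦ hb.1) fun _ ↦ hprox⟩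
  obtain ⟨b, hb⟩ := hB
  obtain ⟨-, a, ha, hab⟩ := hprox hb
  exact ⟨a, ha, b, hb, hab⟩

/-- **Lemma 1.** If `(A,B)` is a proximinal pair of nonempty subsets of a nonempty
ultrametric space and `δ(B) ≤ dist(A,B)`, then `A₀` is nonempty and `B₀ = B`. -/
theorem proxA_nonempty_and_proxB_eq {M : Type*} [MetricSpace M] [IsUltrametricDist M]
    [Nonempty M] (A B : Set M) (hA : A.Nonempty) (hB : B.Nonempty)
    (hAprox : IsProximinal A) (hBprox : IsProximinal B)
    (hδ : ∀ x ∈ B, ∀ y ∈ B, dist x y ≤ setDist A B) :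
    (proxA A B).Nonempty ∧ proxB A B = B :=
  proxA_nonempty_and_proxB_eq_general A B hB hAprox hδ
end

section
/- Let (M,d) be a nonempty spherically complete ultrametric space and let F : M → M be strictly contractive, i.e., d(F(x),F(y)) < d(x,y) whenever x ≠ y. Then F has a unique fixed point. -/
open Metric

variable {M : Type*} [MetricSpace M]

/-!
Write `ρ x = d(x, F x)`. In an ultrametric space, for nonexpansive `F`, the function `ρ`
does not increase on the ball `B x = B(x, ρ x)`, so every `B y` with `y ∈ B x` lies inside `B x`;
also `F x ∈ B x`. Choosing `x_{n+1} ∈ B x_n` with `ρ x_{n+1}` within `1/(n+1)` of the infimum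
of `ρ` on `B x_n` gives nested balls; a point `z` of their intersection has `F z ∈ B z ⊆ B x_n`
for all `n`, whence `ρ z ≤ ρ (F z)`. Strict contractivity turns this into `F z = z`.
-/

def displacement {X : Type*} [PseudoMetricSpace X] (F : X → X) (x : X) : ℝ := dist x (F x)

lemma apply_mem_closedBall_displacement {X : Type*} [PseudoMetricSpace X] (F : X → X) (x : X) :
    F x ∈ closedBall x (displacement F x) :=
  mem_closedBall'.2 le_rfl

section Ultrametric

variable {X : Type*} [PseudoMetricSpace X] [IsUltrametricDist X] {F : X → X}

lemma displacement_le_of_mem_closedBall (hF : ∀ x y, dist (F x) (F y) ≤ dist x y) {x y : X}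
    (hy : y ∈ closedBall x (displacement F x)) : displacement F y ≤ displacement F x := by
  rw [mem_closedBall] at hy
  calc dist y (F y) ≤ max (dist y x) (max (dist x (F x)) (dist (F x) (F y))) :=
        (dist_triangle_max y x (F y)).trans (max_le_max le_rfl (dist_triangle_max _ _ _))
    _ ≤ dist x (F x) :=
        max_le hy (max_le le_rfl ((hF x y).trans ((dist_comm x y).trans_le hy)))

lemma closedBall_displacement_subset (hF : ∀ x y, dist (F x) (F y) ≤ dist x y) {x y : X}
    (hy : y ∈ closedBall x (displacement F x)) :
    closedBall y (displacement F y) ⊆ closedBall x (displacement F x) := by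
  rw [IsUltrametricDist.closedBall_eq_of_mem hy]
  exact closedBall_subset_closedBall (displacement_le_of_mem_closedBall hF hy)

end Ultrametric

lemma exists_seq_displacement_lt_sInf_add {X : Type*} [PseudoMetricSpace X] (F : X → X)
    (x₀ : X) :
    ∃ c : ℕ → X, ∀ n, c (n + 1) ∈ closedBall (c n) (displacement F (c n)) ∧
      displacement F (c (n + 1)) <
        sInf (displacement F '' closedBall (c n) (displacement F (c n))) + 1 / (n + 1) := by
  have hstep : ∀ (n : ℕ) (x : X), ∃ y ∈ closedBall x (displacement F x),
      displacement F y <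
        sInf (displacement F '' closedBall x (displacement F x)) + 1 / (n + 1) := by
    intro n x
    have hne : (displacement F '' closedBall x (displacement F x)).Nonempty :=
      ⟨_, x, mem_closedBall_self dist_nonneg, rfl⟩
    obtain ⟨_, ⟨y, hy, rfl⟩, hlt⟩ := Real.lt_sInf_add_pos hne Nat.one_div_pos_of_nat
    exact ⟨y, hy, hlt⟩
  choose next hnext using hstep
  exact ⟨fun n => Nat.rec (motive := fun _ => X) x₀ next n, fun n => hnext n _⟩

lemma exists_displacement_le_displacement_apply {X : Type*} [MetricSpace X]
    [IsUltrametricDist X] [Nonempty X] (hX : SphericallyCompleteSpace X) {F : X → X}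
    (hF : ∀ x y, dist (F x) (F y) ≤ dist x y) :
    ∃ z, displacement F z ≤ displacement F (F z) := by
  obtain ⟨c, hc⟩ := exists_seq_displacement_lt_sInf_add F (Classical.arbitrary X)
  obtain ⟨z, hz⟩ := hX c (fun n => displacement F (c n)) (fun _ => dist_nonneg)
    (fun n => closedBall_displacement_subset hF (hc n).1)
  rw [Set.mem_iInter] at hz
  refine ⟨z, le_of_forall_pos_le_add fun ε hε => ?_⟩
  obtain ⟨n, hn⟩ := exists_nat_one_div_lt hε
  have hFz : F z ∈ closedBall (c n) (displacement F (c n)) :=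
    closedBall_displacement_subset hF (hz n) (apply_mem_closedBall_displacement F z)
  have hbdd : BddBelow (displacement F '' closedBall (c n) (displacement F (c n))) :=
    ⟨0, Set.forall_mem_image.2 fun _ _ => dist_nonneg⟩
  calc displacement F z ≤ displacement F (c (n + 1)) :=
        displacement_le_of_mem_closedBall hF (hz (n + 1))
    _ ≤ sInf (displacement F '' closedBall (c n) (displacement F (c n))) + 1 / (n + 1) :=
        (hc n).2.le
    _ ≤ displacement F (F z) + ε := add_le_add (csInf_le hbdd ⟨_, hFz, rfl⟩) hn.le

/-- In a nonempty spherically complete ultrametric space, every strictly contractive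
mapping has a unique fixed point. -/
theorem strictlyContractive_unique_fixedPoint {M : Type*} [MetricSpace M]
    [IsUltrametricDist M] [Nonempty M] (hM : SphericallyCompleteSpace M)
    (F : M → M) (hF : ∀ x y : M, x ≠ y → dist (F x) (F y) < dist x y) :
    ∃! p : M, F p = p := by
  have hF_le : ∀ x y, dist (F x) (F y) ≤ dist x y := fun x y =>
    (eq_or_ne x y).elim (fun h => by simp [h]) (fun h => (hF x y h).le)
  obtain ⟨z, hz⟩ := exists_displacement_le_displacement_apply hM hF_le
  have hfix : F z = z := by
    by_contra h
    exact (hF z (F z) (Ne.symm h)).not_ge hz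
  refine ⟨z, hfix, fun q hq => ?_⟩
  by_contra hqz
  simpa [hq, hfix] using hF q z hqz
end

section
/- Let (M,d) be an ultrametric space, let A be a nonempty spherically complete subspace of M, and let F : M → M be a mapping having a fixed point b* ∈ M. Assume that F is strictly contractive on A ∪ {b*} (i.e., d(F(x),F(y)) < d(x,y) for all distinct x,y ∈ A ∪ {b*}) and that A is F-invariant (F(A) ⊆ A). Then b* ∈ A. -/
open Metric

variable {M : Type*} [MetricSpace M]

/-- In an ultrametric space every point of a closed ball is a centre of it, so balls of
radius `r n` around points `c n ∈ A` that all contain `x` are the nested balls around `x`. -/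
theorem SphericallyCompleteSet.exists_forall_dist_le [IsUltrametricDist M] {A : Set M}
    (hAsc : SphericallyCompleteSet A) {x : M} {c : ℕ → M} (hc : ∀ n, c n ∈ A) {r : ℕ → ℝ}
    (hr : Antitone r) (hcx : ∀ n, dist x (c n) ≤ r n) : ∃ z ∈ A, ∀ n, dist x z ≤ r n := by
  have hball : ∀ n, closedBall (c n) (r n) = closedBall x (r n) := fun n =>
    IsUltrametricDist.closedBall_eq_of_mem (mem_closedBall.mpr (hcx n))
  obtain ⟨z, hzA, hz⟩ := hAsc c r hc (fun n => dist_nonneg.trans (hcx n)) fun n => by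
    simp only [hball]
    exact Set.inter_subset_inter_right _ (closedBall_subset_closedBall (hr n.le_succ))
  simp only [hball, Set.mem_iInter, mem_closedBall'] at hz
  exact ⟨z, hzA, hz⟩

theorem SphericallyCompleteSet.isProximinal [IsUltrametricDist M] {A : Set M}
    (hAsc : SphericallyCompleteSet A) (hA : A.Nonempty) : IsProximinal A := by
  intro x
  set r : ℕ → ℝ := fun n => infDist x A + 1 / (n + 1)
  have hr : Antitone r := fun m n hmn => by simp only [r]; gcongr
  have hr_lim : Filter.Tendsto r Filter.atTop (nhds (infDist x A)) := by
    simpa [r] using (tendsto_const_nhds (x := infDist x A)).add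
      (tendsto_one_div_add_atTop_nhds_zero_nat (𝕜 := ℝ))
  have happrox : ∀ n, ∃ a ∈ A, dist x a < r n := fun n =>
    (infDist_lt_iff hA).mp (lt_add_of_pos_right _ Nat.one_div_pos_of_nat)
  choose c hcA hcx using happrox
  obtain ⟨z, hzA, hz⟩ := hAsc.exists_forall_dist_le hcA hr fun n => (hcx n).le
  exact ⟨z, hzA, le_antisymm (ge_of_tendsto' hr_lim hz) (infDist_le_dist_of_mem hzA)⟩

/-- A best approximation `a ∈ A` of the fixed point `b` would give `F a ∈ A` strictly closer
to `b = F b` than `dist b A`. -/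
theorem mem_of_isProximinal_of_mapsTo {A : Set M} (hA : IsProximinal A) {F : M → M}
    (hFA : Set.MapsTo F A A) {b : M} (hfix : F b = b)
    (hF : ∀ a ∈ A, a ≠ b → dist (F a) (F b) < dist a b) : b ∈ A := by
  obtain ⟨a, haA, hab⟩ := hA b
  by_contra hb
  have hlt : dist b (F a) < infDist b A := by
    simpa only [hfix, dist_comm, hab] using hF a haA fun h => hb (h ▸ haA)
  exact (infDist_le_dist_of_mem (hFA haA)).not_gt hlt

/-- **Corollary 2.12.** Let `A` be a nonempty spherically complete subspace of an
ultrametric space `M` and let `F : M → M` have a fixed point `b*`. If `F` is strictly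
contractive on `A ∪ {b*}` and `A` is `F`-invariant, then `b* ∈ A`. -/
theorem fixedPoint_mem_of_strictlyContractive {M : Type*} [MetricSpace M]
    [IsUltrametricDist M] (A : Set M) (hA : A.Nonempty)
    (hAsc : SphericallyCompleteSet A) (F : M → M) (b' : M) (hfix : F b' = b')
    (hF : ∀ x ∈ A ∪ {b'}, ∀ y ∈ A ∪ {b'}, x ≠ y → dist (F x) (F y) < dist x y)
    (hFA : Set.MapsTo F A A) :
    b' ∈ A :=
  mem_of_isProximinal_of_mapsTo (hAsc.isProximinal hA) hFA hfix fun a ha hne =>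
    hF a (Or.inl ha) b' (Or.inr rfl) hne
end
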